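/- arXiv:1205.0615 — 2 statements merged into one kernel-verified Lean document; each statement's English description precedes it below -/
import Mathlib

section
/- Let f: ℤ_2 → ℤ_2 be 1-Lipschitz with f(a + 2^r) ≡ a + 2^r (mod 2^{r+1}), where r ≥ 1 and a ∈ {0, ..., 2^r - 1}. Define g(x) = (f(a + 2^r + 2^{r+1}x) - (a + 2^r))/2^{r+1}. Then f is ergodic on the sphere S_{2^{-r}}(a) (with respect to the normalized Haar measure on the sphere) if and only if g is a 1-Lipschitz ergodic transformation of ℤ_2. -/
open MeasureTheory ProbabilityTheory
open scoped Classical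

noncomputable instance : MeasurableSpace ℤ_[2] := borel _
instance : BorelSpace ℤ_[2] := ⟨rfl⟩

/-- The van der Put basis function for p = 2: characteristic function of the ball
`m + 2^(⌊log₂ m⌋ + 1) ℤ₂` (with `⌊log₂ 0⌋ = 0`). -/
noncomputable def vdpChi2 (m : ℕ) (x : ℤ_[2]) : ℤ_[2] :=
  if (2 : ℤ_[2]) ^ (Nat.log 2 m + 1) ∣ (x - (m : ℤ_[2])) then 1 else 0

lemma two_pow_dvd_iff_norm_le' (n : ℕ) (x : ℤ_[2]) :
    (2 : ℤ_[2]) ^ n ∣ x ↔ ‖x‖ ≤ (2 : ℝ) ^ (-(n : ℤ)) := by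
  have := (PadicInt.norm_le_pow_iff_mem_span_pow x n).symm
  rw [Ideal.mem_span_singleton] at this
  simpa using this

lemma norm_two_pow' (n : ℕ) : ‖(2:ℤ_[2])^n‖ = (2:ℝ)^(-(n:ℤ)) := by
  simpa using PadicInt.norm_p_pow (p := 2) n

lemma sphere_eq_dvd' (r : ℕ) (a z : ℤ_[2]) :
    ‖z - a‖ = (2:ℝ) ^ (-(r:ℤ)) ↔ (2:ℤ_[2]) ^ (r+1) ∣ (z - (a + 2 ^ r)) := by
  constructor
  · intro h
    obtain ⟨w, hw⟩ := (two_pow_dvd_iff_norm_le' r (z - a)).2 h.le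
    have hnw : ‖w‖ = 1 := by
      have h2 : (2:ℝ) ^ (-(r:ℤ)) ≠ 0 := by positivity
      have := h
      rw [hw, norm_mul, norm_two_pow'] at this
      field_simp at this
      linarith [this]
    have hw1 : (2:ℤ_[2]) ∣ w - 1 := by
      have hs := PadicInt.appr_spec 1 w
      rw [Ideal.mem_span_singleton, pow_one] at hs
      have hlt := PadicInt.appr_lt w 1
      interval_cases h : PadicInt.appr w 1
      · exfalso
        simp only [Nat.cast_zero, sub_zero] at hs
        have : ‖w‖ ≤ (2:ℝ)^(-(1:ℕ):ℤ) := (two_pow_dvd_iff_norm_le' 1 w).1 (by simpa using hs)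
        rw [hnw] at this
        norm_num at this
      · simpa using hs
    obtain ⟨k, hk⟩ := hw1
    exact ⟨k, by linear_combination hw + 2^r * hk⟩
  · intro h
    have hle : ‖z - (a + 2^r)‖ ≤ (2:ℝ)^(-(r+1:ℕ):ℤ) := (two_pow_dvd_iff_norm_le' _ _).1 h
    have hlt : ‖z - (a + 2^r)‖ < ‖(2:ℤ_[2])^r‖ := by
      rw [norm_two_pow']
      refine lt_of_le_of_lt hle ?_
      apply zpow_lt_zpow_right₀ (by norm_num : (1:ℝ) < 2)
      push_cast; omega
    have hz : z - a = (z - (a + 2^r)) + 2^r := by ring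
    rw [hz, PadicInt.norm_add_eq_max_of_ne hlt.ne, max_eq_right hlt.le, norm_two_pow']

theorem ergodic_on_sphere_iff_conjugate_ergodic
    (μ : Measure ℤ_[2]) (hμ : μ.IsAddHaarMeasure) (hμ1 : IsProbabilityMeasure μ)
    (f : ℤ_[2] → ℤ_[2]) (hf : ∀ x y : ℤ_[2], ‖f x - f y‖ ≤ ‖x - y‖)
    (r : ℕ) (hr : 1 ≤ r) (a : ℕ) (ha : a < 2 ^ r)
    (hinv : (2 : ℤ_[2]) ^ (r + 1) ∣ f ((a : ℤ_[2]) + 2 ^ r) - ((a : ℤ_[2]) + 2 ^ r))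
    (g : ℤ_[2] → ℤ_[2])
    (hg : ∀ x : ℤ_[2],
      (2 : ℤ_[2]) ^ (r + 1) * g x =
        f ((a : ℤ_[2]) + 2 ^ r + 2 ^ (r + 1) * x) - ((a : ℤ_[2]) + 2 ^ r)) :
    Ergodic f (μ[|{z : ℤ_[2] | ‖z - (a : ℤ_[2])‖ = (2 : ℝ) ^ (-(r : ℤ))}]) ↔
      ((∀ x y : ℤ_[2], ‖g x - g y‖ ≤ ‖x - y‖) ∧ Ergodic g μ) := by
  haveI := hμ
  set c : ℤ_[2] := (a : ℤ_[2]) + 2 ^ r with hc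
  set S : Set ℤ_[2] := {z : ℤ_[2] | ‖z - (a : ℤ_[2])‖ = (2 : ℝ) ^ (-(r : ℤ))} with hSdef
  set φ : ℤ_[2] → ℤ_[2] := fun x => c + 2 ^ (r + 1) * x with hφ
  have hmemS : ∀ z : ℤ_[2], z ∈ S ↔ (2:ℤ_[2]) ^ (r+1) ∣ z - c := fun z =>
    sphere_eq_dvd' r (a : ℤ_[2]) z
  have hp2 : (2:ℤ_[2]) ^ (r+1) ≠ 0 := pow_ne_zero _ (by norm_num)
  have hrange : Set.range φ = S := by
    ext z
    rw [hmemS]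
    constructor
    · rintro ⟨x, rfl⟩
      exact ⟨x, by simp only [hφ]; ring⟩
    · rintro ⟨k, hk⟩
      exact ⟨k, by simp only [hφ]; linear_combination -hk⟩
  have hφinj : Function.Injective φ := by
    intro x y h
    simp only [hφ] at h
    exact mul_left_cancel₀ hp2 (by linear_combination h)
  have hφcont : Continuous φ := by
    simp only [hφ]; fun_prop
  have hφme : MeasurableEmbedding φ := (hφcont.isClosedEmbedding hφinj).measurableEmbedding
  have hφmeas : Measurable φ := hφme.measurable
  have hSopen : IsOpen S := by
    have hSeq : S = {z : ℤ_[2] | ‖z - c‖ < (2:ℝ) ^ (-(r:ℤ))} := by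
      ext z
      rw [hmemS, Set.mem_setOf_eq, two_pow_dvd_iff_norm_le',
        show (-(↑(r+1):ℤ)) = -(r:ℤ) - 1 by push_cast; ring]
      have h2 := PadicInt.norm_lt_pow_iff_norm_le_pow_sub_one (z - c) (-(r:ℤ))
      simp only [Nat.cast_ofNat] at h2 ⊢
      exact h2.symm
    rw [hSeq]
    exact isOpen_lt (by fun_prop) continuous_const
  have hSm : MeasurableSet S := hSopen.measurableSet
  have hcS : c ∈ S := (hmemS c).2 ⟨0, by ring⟩
  have hμS : μ S ≠ 0 := (hSopen.measure_pos μ ⟨c, hcS⟩).ne'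
  set m : Measure ℤ_[2] := μ[|S] with hm
  haveI hmP : IsProbabilityMeasure m := cond_isProbabilityMeasure hμS
  have hmSc : m Sᶜ = 0 := by
    rw [hm, cond_apply hSm]
    simp
  have hmS1 : m S = 1 := by
    have h := measure_compl hSm (measure_ne_top m S)
    rw [hmSc, measure_univ] at h
    exact le_antisymm prob_le_one (tsub_eq_zero_iff_le.mp h.symm)
  -- conjugation identity
  have hfφg : ∀ x, f (φ x) = φ (g x) := by
    intro x
    simp only [hφ]
    linear_combination -hg x
  -- g is 1-Lipschitz
  have hglip : ∀ x y : ℤ_[2], ‖g x - g y‖ ≤ ‖x - y‖ := by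
    intro x y
    have h1 : (2:ℤ_[2])^(r+1) * (g x - g y) = f (φ x) - f (φ y) := by
      simp only [hφ]
      linear_combination hg x - hg y
    have h2 : ‖f (φ x) - f (φ y)‖ ≤ ‖φ x - φ y‖ := hf _ _
    have h3 : φ x - φ y = 2^(r+1) * (x - y) := by simp only [hφ]; ring
    rw [← h1, h3, norm_mul, norm_mul] at h2
    exact le_of_mul_le_mul_left h2 (norm_pos_iff.2 hp2)
  have hfc : Continuous f :=
    (LipschitzWith.of_dist_le_mul (K := 1) fun x y => by
      simpa [dist_eq_norm] using hf x y).continuous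
  have hgc : Continuous g :=
    (LipschitzWith.of_dist_le_mul (K := 1) fun x y => by
      simpa [dist_eq_norm] using hglip x y).continuous
  have hfm : Measurable f := hfc.measurable
  have hgm : Measurable g := hgc.measurable
  -- the pushforward of μ under φ is the conditional measure m
  have hνap : ∀ A : Set ℤ_[2], Measure.comap φ m A = m (φ '' A) := fun A =>
    hφme.comap_apply m A
  haveI : IsProbabilityMeasure (Measure.comap φ m) := by
    constructor
    rw [hνap, Set.image_univ, hrange, hmS1]
  haveI : (Measure.comap φ m).IsAddLeftInvariant := by
    constructor
    intro b
    ext A hA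
    rw [Measure.map_apply (measurable_const_add b) hA, hνap, hνap]
    have himg : φ '' ((fun x => b + x) ⁻¹' A)
        = (fun z => 2^(r+1) * b + z) ⁻¹' (φ '' A) := by
      ext z
      constructor
      · rintro ⟨x, hx, rfl⟩
        exact ⟨b + x, hx, by simp only [hφ]; ring⟩
      · rintro ⟨y, hy, hyz⟩
        refine ⟨y - b, by simpa using hy, ?_⟩
        simp only [hφ] at hyz ⊢
        linear_combination hyz
    rw [himg]
    have hdS : (fun z => (2:ℤ_[2])^(r+1) * b + z) ⁻¹' S = S := by
      ext z
      simp only [Set.mem_preimage, hmemS]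
      have hd : (2:ℤ_[2])^(r+1) ∣ 2^(r+1) * b := ⟨b, rfl⟩
      have he : (2:ℤ_[2])^(r+1) * b + z - c = 2^(r+1) * b + (z - c) := by ring
      rw [he, dvd_add_right hd]
    rw [hm, cond_apply hSm, cond_apply hSm]
    congr 1
    have : S ∩ ((fun z => (2:ℤ_[2])^(r+1) * b + z) ⁻¹' (φ '' A))
        = (fun z => (2:ℤ_[2])^(r+1) * b + z) ⁻¹' (S ∩ φ '' A) := by
      rw [Set.preimage_inter, hdS]
    rw [this, measure_preimage_add]
  have hνμ : Measure.comap φ m = μ := by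
    have h1 := Measure.isAddLeftInvariant_eq_smul (Measure.comap φ m) μ
    have h2 := congrArg (fun ρ : Measure ℤ_[2] => ρ Set.univ) h1
    simp only [measure_univ, Measure.smul_apply, smul_eq_mul, mul_one,
      ENNReal.smul_def] at h2
    rw [h1, ENNReal.smul_def, h2.symm, one_smul]
  have hmap : Measure.map φ μ = m := by
    rw [← hνμ, hφme.map_comap, hrange]
    apply Measure.restrict_eq_self_of_ae_mem
    rw [Filter.eventually_iff, mem_ae_iff]
    simpa using hmSc
  -- main equivalence
  constructor
  · intro hEf
    refine ⟨hglip, ?_⟩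
    have hQE := hEf.quasiErgodic
    constructor
    · -- measure preserving
      refine ⟨hgm, ?_⟩
      ext t ht
      rw [Measure.map_apply hgm ht]
      have himt : MeasurableSet (φ '' t) := hφme.measurableSet_image.2 ht
      have hset : g ⁻¹' t = φ ⁻¹' (f ⁻¹' (φ '' t)) := by
        ext x
        simp only [Set.mem_preimage, hfφg x]
        exact (hφinj.mem_set_image).symm
      calc μ (g ⁻¹' t) = μ (φ ⁻¹' (f ⁻¹' (φ '' t))) := by rw [hset]
        _ = (Measure.map φ μ) (f ⁻¹' (φ '' t)) :=
            (Measure.map_apply hφmeas (hfm himt)).symm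
        _ = m (f ⁻¹' (φ '' t)) := by rw [hmap]
        _ = m (φ '' t) := hEf.toMeasurePreserving.measure_preimage himt.nullMeasurableSet
        _ = (Measure.map φ μ) (φ '' t) := by rw [hmap]
        _ = μ (φ ⁻¹' (φ '' t)) := Measure.map_apply hφmeas himt
        _ = μ t := by rw [hφinj.preimage_image]
    · -- pre-ergodic
      constructor
      intro t htm hti
      rw [Filter.eventuallyConst_set']
      have hsm : MeasurableSet (φ '' t) := hφme.measurableSet_image.2 htm
      have hsub : φ '' t ⊆ f ⁻¹' (φ '' t) := by
        rintro z ⟨y, hy, rfl⟩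
        have hgy : g y ∈ t := by rw [← hti] at hy; exact hy
        simp only [Set.mem_preimage, hfφg y]
        exact Set.mem_image_of_mem φ hgy
      have hdiff : f ⁻¹' (φ '' t) \ (φ '' t) ⊆ Sᶜ := by
        rintro z ⟨hz1, hz2⟩ hzS
        apply hz2
        have : z ∈ Set.range φ := by rw [hrange]; exact hzS
        obtain ⟨y, rfl⟩ := this
        have h1 : φ (g y) ∈ φ '' t := by rw [← hfφg y]; exact hz1
        have hgy : g y ∈ t := hφinj.mem_set_image.1 h1
        have : y ∈ t := by rw [← hti]; exact hgy
        exact Set.mem_image_of_mem φ this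
      have hae : f ⁻¹' (φ '' t) =ᵐ[m] (φ '' t) := by
        rw [MeasureTheory.ae_eq_set]
        constructor
        · exact measure_mono_null hdiff hmSc
        · rw [Set.diff_eq_empty.2 hsub]; exact measure_empty
      rcases hQE.ae_empty_or_univ₀ hsm.nullMeasurableSet hae with h | h
      · left
        rw [MeasureTheory.ae_eq_empty] at h ⊢
        rw [show μ t = m (φ '' t) by
          rw [← hmap, Measure.map_apply hφmeas hsm, hφinj.preimage_image]]
        exact h
      · right
        rw [MeasureTheory.ae_eq_univ] at h ⊢
        rw [show μ tᶜ = m (φ '' t)ᶜ by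
          rw [← hmap, Measure.map_apply hφmeas hsm.compl, Set.preimage_compl,
            hφinj.preimage_image]]
        exact h
  · rintro ⟨-, hEg⟩
    constructor
    · refine ⟨hfm, ?_⟩
      rw [← hmap, Measure.map_map hfm hφmeas]
      have hco : f ∘ φ = φ ∘ g := funext hfφg
      rw [hco, ← Measure.map_map hφmeas hgm, hEg.toMeasurePreserving.map_eq]
    · constructor
      intro s hsm hsi
      rw [Filter.eventuallyConst_set']
      have htm : MeasurableSet (φ ⁻¹' s) := hφmeas hsm
      have hti : g ⁻¹' (φ ⁻¹' s) = φ ⁻¹' s := by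
        ext x
        simp only [Set.mem_preimage, ← hfφg x]
        rw [show f (φ x) ∈ s ↔ φ x ∈ f ⁻¹' s from Iff.rfl, hsi]
      rcases hEg.ae_empty_or_univ htm hti with h | h
      · left
        rw [MeasureTheory.ae_eq_empty] at h ⊢
        rw [← hmap, Measure.map_apply hφmeas hsm]
        exact h
      · right
        rw [MeasureTheory.ae_eq_univ] at h ⊢
        rw [← hmap, Measure.map_apply hφmeas hsm.compl, Set.preimage_compl]
        exact h
end

section
/- Given 1-Lipschitz functions t, w: ℤ_2 → ℤ_2, the function t + 4w is ergodic on ℤ_2 (with respect to the Haar measure μ_2) if and only if t is ergodic on ℤ_2. -/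
open MeasureTheory ProbabilityTheory

/-!
For a `1`-Lipschitz `f : ℤ_[p] → ℤ_[p]`, ergodicity for Haar measure is equivalent to
transitivity of the maps `f` induces on every `ZMod (p ^ n)`: an invariant set of residues gives
an invariant union of cylinders, and conversely transitivity forces every invariant set to meet
all cylinders of a level in equal measure.

For `p = 2`, a map that is transitive modulo `2 ^ n` and bijective modulo `2 ^ (n + 1)` is
transitive modulo `2 ^ (n + 1)` iff `f^[2 ^ n] 0 ≢ 0`, and telescoping along the orbit of `0`
gives `f^[2 ^ n] 0 ≡ ∑_{l < 2 ^ n} (f l - l) mod 2 ^ (n + 1)`. Passing from `t` to `t + 4 w`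
changes this sum by `4 ∑_{l < 2 ^ n} w l`, which vanishes modulo `2 ^ (n + 1)` since
`‖∑_{l < 2 ^ m} w l‖ ≤ 2 ^ (1 - m)` for `1`-Lipschitz `w`. A transitive `t` is an isometry and
`4 w` is a strict contraction, so `t + 4 w` is an isometry, hence bijective at every level, and
induction on `n` transfers transitivity. The converse uses `t = (t + 4 w) + 4 (-w)`.
-/

namespace Function

variable {α : Type*} {f : α → α}

def IsTransitive (f : α → α) : Prop := ∀ a b, ∃ k, f^[k] a = b

namespace IsTransitive

theorem surjective (hf : IsTransitive f) : Surjective f := fun b => by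
  obtain ⟨k, hk⟩ := hf (f b) b
  exact ⟨f^[k] b, by rwa [← iterate_succ_apply' f, iterate_succ_apply]⟩

theorem bijective [Finite α] (hf : IsTransitive f) : Bijective f :=
  Finite.surjective_iff_bijective.mp hf.surjective

theorem apply_eq_apply {β : Type*} (hf : IsTransitive f) {φ : α → β} (hφ : φ ∘ f = φ)
    (a b : α) : φ a = φ b := by
  obtain ⟨k, rfl⟩ := hf a b
  exact (congrFun (iterate_invariant hφ k) a).symm

variable [Fintype α]

theorem minimalPeriod_eq_card (hf : IsTransitive f) (x : α) :
    minimalPeriod f x = Fintype.card α := by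
  have hpos : 0 < minimalPeriod f x :=
    minimalPeriod_pos_of_mem_periodicPts (hf.bijective.injective.mem_periodicPts x)
  refine le_antisymm minimalPeriod_le_card ?_
  have hsurj : Surjective fun k : Fin (minimalPeriod f x) => f^[k] x := fun b => by
    obtain ⟨k, rfl⟩ := hf x b
    exact ⟨⟨k % _, Nat.mod_lt _ hpos⟩, iterate_mod_minimalPeriod_eq⟩
  simpa using Fintype.card_le_of_surjective _ hsurj

theorem iterate_card (hf : IsTransitive f) (x : α) : f^[Fintype.card α] x = x :=
  hf.minimalPeriod_eq_card x ▸ iterate_minimalPeriod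

theorem sum_range_card_iterate {M : Type*} [AddCommMonoid M] (hf : IsTransitive f) (φ : α → M)
    (x : α) : ∑ k ∈ Finset.range (Fintype.card α), φ (f^[k] x) = ∑ a, φ a := by
  refine Finset.sum_nbij (f^[·] x) (fun _ _ => Finset.mem_univ _) ?_ ?_ fun _ _ => rfl
  · rw [Finset.coe_range, ← hf.minimalPeriod_eq_card x]
    exact iterate_injOn_Iio_minimalPeriod
  · intro b _
    obtain ⟨k, rfl⟩ := hf x b
    refine ⟨k % Fintype.card α, Finset.mem_range.2 (Nat.mod_lt _ (Fintype.card_pos_iff.2 ⟨x⟩)), ?_⟩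
    rw [← hf.minimalPeriod_eq_card x]
    exact iterate_mod_minimalPeriod_eq

end IsTransitive

theorem isTransitive_of_minimalPeriod_eq_card [Fintype α] {x : α}
    (hx : minimalPeriod f x = Fintype.card α) : IsTransitive f := by
  have hinj : Injective fun k : Fin (Fintype.card α) => f^[k] x := fun i j hij =>
    Fin.ext (iterate_injOn_Iio_minimalPeriod (by simp [hx]) (by simp [hx]) hij)
  have horbit (b : α) : ∃ k < Fintype.card α, f^[k] x = b := by
    obtain ⟨k, hk⟩ := ((Fintype.bijective_iff_injective_and_card _).2 ⟨hinj, by simp⟩).2 b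
    exact ⟨k, k.2, hk⟩
  intro a b
  obtain ⟨i, hi, rfl⟩ := horbit a
  obtain ⟨j, -, rfl⟩ := horbit b
  refine ⟨Fintype.card α - i + j, ?_⟩
  rw [← iterate_add_apply, show Fintype.card α - i + j + i = j + minimalPeriod f x by omega,
    iterate_add_apply, iterate_minimalPeriod]

theorem isTransitive_of_forall_preimage_eq [Finite α] (hf : Bijective f)
    (h : ∀ s : Set α, f ⁻¹' s = s → s = ∅ ∨ s = Set.univ) : IsTransitive f := by
  set σ : Equiv.Perm α := Equiv.ofBijective f hf
  intro a b
  have hcycle : {c | σ.SameCycle a c} = Set.univ := by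
    refine (h _ ?_).resolve_left (Set.nonempty_iff_ne_empty.mp ⟨a, Equiv.Perm.SameCycle.refl σ a⟩)
    ext c
    exact Equiv.Perm.sameCycle_apply_right
  have hab : σ.SameCycle a b := Set.eq_univ_iff_forall.1 hcycle b
  obtain ⟨k, hk⟩ := hab.exists_nat_pow_eq
  exact ⟨k, by rwa [Equiv.Perm.coe_pow] at hk⟩

end Function

theorem LipschitzWith.add_of_isUltrametricDist {E F : Type*} [SeminormedAddCommGroup E]
    [SeminormedAddCommGroup F] [IsUltrametricDist F] {K : NNReal} {t u : E → F}
    (ht : LipschitzWith K t) (hu : LipschitzWith K u) : LipschitzWith K (t + u) :=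
  lipschitzWith_iff_norm_sub_le.2 fun x y => by
    rw [Pi.add_apply, Pi.add_apply, add_sub_add_comm]
    exact (IsUltrametricDist.norm_add_le_max _ _).trans
      (max_le (ht.norm_sub_le x y) (hu.norm_sub_le x y))

theorem Isometry.add_of_norm_sub_lt {E F : Type*} [SeminormedAddCommGroup E]
    [SeminormedAddCommGroup F] [IsUltrametricDist F] {t u : E → F} (ht : Isometry t)
    (hu : ∀ x y, x ≠ y → ‖u x - u y‖ < ‖x - y‖) : Isometry (t + u) := by
  refine Isometry.of_dist_eq fun x y => ?_
  rcases eq_or_ne x y with rfl | hxy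
  · simp
  have htxy : ‖t x - t y‖ = ‖x - y‖ := by simpa [dist_eq_norm] using ht.dist_eq x y
  rw [dist_eq_norm, Pi.add_apply, Pi.add_apply, add_sub_add_comm,
    IsUltrametricDist.norm_add_eq_max_of_norm_ne_norm (by rw [htxy]; exact (hu x y hxy).ne'),
    htxy, max_eq_left (hu x y hxy).le, dist_eq_norm]

namespace PadicInt

open Function Set

variable {p : ℕ} [Fact p.Prime] {n : ℕ} {f : ℤ_[p] → ℤ_[p]}

theorem toZModPow_eq_zero_iff_norm_le {x : ℤ_[p]} :
    toZModPow n x = 0 ↔ ‖x‖ ≤ (p : ℝ) ^ (-(n : ℤ)) := by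
  rw [norm_le_pow_iff_mem_span_pow, ← ker_toZModPow, RingHom.mem_ker]

theorem toZModPow_eq_iff_norm_sub_le {x y : ℤ_[p]} :
    toZModPow n x = toZModPow n y ↔ ‖x - y‖ ≤ (p : ℝ) ^ (-(n : ℤ)) := by
  rw [← toZModPow_eq_zero_iff_norm_le, map_sub, sub_eq_zero]

theorem toZModPow_natCast_val (a : ZMod (p ^ n)) : toZModPow n (a.val : ℤ_[p]) = a := by
  rw [map_natCast, ZMod.natCast_zmod_val]

theorem preimage_toZModPow_singleton (a : ZMod (p ^ n)) :
    toZModPow n ⁻¹' {a} = Metric.closedBall (a.val : ℤ_[p]) ((p : ℝ) ^ (-(n : ℤ))) := by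
  ext x
  rw [mem_preimage, mem_singleton_iff, Metric.mem_closedBall, dist_eq_norm,
    ← toZModPow_eq_iff_norm_sub_le, toZModPow_natCast_val]

theorem continuous_toZModPow : Continuous (toZModPow n : ℤ_[p] → ZMod (p ^ n)) :=
  continuous_discrete_rng.2 fun a => by
    rw [preimage_toZModPow_singleton]
    exact IsUltrametricDist.isOpen_closedBall _ (zpow_pos (mod_cast (Fact.out : p.Prime).pos) _).ne'

theorem toZModPow_apply_eq_of_lipschitzWith (hf : LipschitzWith 1 f) {x y : ℤ_[p]}
    (h : toZModPow n x = toZModPow n y) :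
    toZModPow n (f x) = toZModPow n (f y) := by
  rw [toZModPow_eq_iff_norm_sub_le] at h ⊢
  simpa using (hf.norm_sub_le x y).trans (by simpa using h)

/-- The map induced by `f` on residues modulo `p ^ n`; it does not depend on the choice of
lifts `a.val` when `f` is `1`-Lipschitz. -/
noncomputable def inducedMap (f : ℤ_[p] → ℤ_[p]) (n : ℕ) (a : ZMod (p ^ n)) : ZMod (p ^ n) :=
  toZModPow n (f a.val)

theorem semiconj_inducedMap (hf : LipschitzWith 1 f) :
    Semiconj (toZModPow n) f (inducedMap f n) := fun _ =>
  toZModPow_apply_eq_of_lipschitzWith hf (toZModPow_natCast_val _).symm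

theorem toZModPow_iterate (hf : LipschitzWith 1 f) (k : ℕ) (x : ℤ_[p]) :
    toZModPow n (f^[k] x) = (inducedMap f n)^[k] (toZModPow n x) :=
  ((semiconj_inducedMap hf).iterate_right k).eq x

theorem preimage_preimage_toZModPow (hf : LipschitzWith 1 f) (s : Set (ZMod (p ^ n))) :
    f ⁻¹' (toZModPow n ⁻¹' s) = toZModPow n ⁻¹' (inducedMap f n ⁻¹' s) := by
  rw [← preimage_comp, ← preimage_comp, (semiconj_inducedMap hf).comp_eq]

def cylinders (p : ℕ) [Fact p.Prime] : Set (Set ℤ_[p]) :=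
  {S | ∃ (n : ℕ) (a : ZMod (p ^ n)), toZModPow n ⁻¹' {a} = S}

theorem isPiSystem_cylinders : IsPiSystem (cylinders p) := by
  have key {m n : ℕ} (h : m ≤ n) (a : ZMod (p ^ m)) (b : ZMod (p ^ n))
      (hab : (toZModPow m ⁻¹' {a} ∩ toZModPow n ⁻¹' {b}).Nonempty) :
      toZModPow m ⁻¹' {a} ∩ toZModPow n ⁻¹' {b} ∈ cylinders p := by
    obtain ⟨x, hxa, hxb⟩ := hab
    refine ⟨n, b, (inter_eq_right.2 fun y hy => ?_).symm⟩
    rw [mem_preimage, mem_singleton_iff] at hxa hxb hy ⊢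
    rw [← cast_toZModPow m n h, hy, ← hxb, cast_toZModPow m n h, hxa]
  rintro _ ⟨m, a, rfl⟩ _ ⟨n, b, rfl⟩ hab
  rcases le_total m n with h | h
  · exact key h a b hab
  · rw [inter_comm] at hab ⊢
    exact key h b a hab

theorem isTopologicalBasis_cylinders : TopologicalSpace.IsTopologicalBasis (cylinders p) := by
  refine TopologicalSpace.isTopologicalBasis_of_isOpen_of_nhds ?_ fun x U hxU hU => ?_
  · rintro _ ⟨n, a, rfl⟩
    exact (isOpen_discrete _).preimage continuous_toZModPow
  obtain ⟨ε, hε, hball⟩ := Metric.isOpen_iff.mp hU x hxU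
  obtain ⟨n, hn⟩ := exists_pow_neg_lt p hε
  refine ⟨toZModPow n ⁻¹' {toZModPow n x}, ⟨n, _, rfl⟩, rfl, fun y hy => hball ?_⟩
  rw [Metric.mem_ball, dist_eq_norm]
  exact (toZModPow_eq_iff_norm_sub_le.mp hy).trans_lt hn

theorem injective_inducedMap_of_isometry (hf : Isometry f) : Injective (inducedMap f n) :=
  fun a b hab => by
    rw [← toZModPow_natCast_val a, ← toZModPow_natCast_val b, toZModPow_eq_iff_norm_sub_le]
    simpa [← dist_eq_norm, hf.dist_eq] using toZModPow_eq_iff_norm_sub_le.mp hab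

theorem isometry_of_forall_injective_inducedMap (hf : LipschitzWith 1 f)
    (hinj : ∀ n, Injective (inducedMap f n)) : Isometry f := by
  have hcongr {n : ℕ} {x y : ℤ_[p]} (h : toZModPow n (f x) = toZModPow n (f y)) :
      toZModPow n x = toZModPow n y := by
    rwa [(semiconj_inducedMap hf).eq, (semiconj_inducedMap hf).eq, (hinj n).eq_iff] at h
  refine Isometry.of_dist_eq fun x y => le_antisymm (by simpa using hf.dist_le_mul x y) ?_
  rcases eq_or_ne (f x) (f y) with hxy | hxy
  · simp [← ext_of_toZModPow.mp fun n => hcongr (congrArg _ hxy)]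
  rw [dist_eq_norm, dist_eq_norm, norm_eq_zpow_neg_valuation (sub_ne_zero.2 hxy),
    ← toZModPow_eq_iff_norm_sub_le]
  exact hcongr (toZModPow_eq_iff_norm_sub_le.2 (norm_eq_zpow_neg_valuation (sub_ne_zero.2 hxy)).le)

section Measure

open Filter
open scoped ENNReal

variable [MeasurableSpace ℤ_[p]] [BorelSpace ℤ_[p]]

theorem measurable_toZModPow : Measurable (toZModPow n : ℤ_[p] → ZMod (p ^ n)) :=
  measurable_to_countable' fun _ =>
    ((isOpen_discrete _).preimage continuous_toZModPow).measurableSet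

theorem measure_ext_of_cylinders {ν₁ ν₂ : Measure ℤ_[p]} [IsFiniteMeasure ν₁]
    (h : ∀ n (a : ZMod (p ^ n)), ν₁ (toZModPow n ⁻¹' {a}) = ν₂ (toZModPow n ⁻¹' {a})) :
    ν₁ = ν₂ := by
  refine ext_of_generate_finite _ ?_ isPiSystem_cylinders (fun _ ⟨n, a, hS⟩ => hS ▸ h n a) ?_
  · rw [BorelSpace.measurable_eq (α := ℤ_[p]), isTopologicalBasis_cylinders.borel_eq_generateFrom]
  · have : Subsingleton (ZMod (p ^ 0)) := inferInstanceAs (Subsingleton (ZMod 1))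
    have huniv : toZModPow 0 ⁻¹' {(0 : ZMod (p ^ 0))} = univ :=
      eq_univ_of_forall fun x => Subsingleton.elim (toZModPow 0 x) 0
    rw [← huniv]
    exact h 0 0

theorem measure_preimage_toZModPow_singleton_of_forall_eq {ν : Measure ℤ_[p]}
    (h : ∀ a b : ZMod (p ^ n), ν (toZModPow n ⁻¹' {a}) = ν (toZModPow n ⁻¹' {b}))
    (a : ZMod (p ^ n)) : ν (toZModPow n ⁻¹' {a}) = ν univ / (p : ℝ≥0∞) ^ n := by
  have hsum := sum_measure_preimage_singleton (μ := ν) (Finset.univ : Finset (ZMod (p ^ n)))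
    fun b _ => measurable_toZModPow (measurableSet_singleton b)
  rw [Finset.coe_univ, preimage_univ, Finset.sum_congr rfl fun b _ => h b a, Finset.sum_const,
    Finset.card_univ, ZMod.card, nsmul_eq_mul, mul_comm] at hsum
  rw [← hsum, Nat.cast_pow, ENNReal.mul_div_cancel_right (by simp [(Fact.out : p.Prime).ne_zero])
    (by simp)]

theorem measure_preimage_toZModPow_inducedMap (hf : LipschitzWith 1 f)
    (hF : Injective (inducedMap f n)) {ν : Measure ℤ_[p]} (hν : MeasurePreserving f ν ν)
    (a : ZMod (p ^ n)) :
    ν (toZModPow n ⁻¹' {inducedMap f n a}) = ν (toZModPow n ⁻¹' {a}) := by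
  rw [← hν.measure_preimage (measurable_toZModPow (measurableSet_singleton _)).nullMeasurableSet,
    preimage_preimage_toZModPow hf, ← image_singleton, hF.preimage_image]

variable (μ : Measure ℤ_[p]) [μ.IsAddLeftInvariant] [IsProbabilityMeasure μ]

theorem measure_preimage_toZModPow_singleton (a : ZMod (p ^ n)) :
    μ (toZModPow n ⁻¹' {a}) = ((p : ℝ≥0∞) ^ n)⁻¹ := by
  refine (measure_preimage_toZModPow_singleton_of_forall_eq (fun a b => ?_) a).trans (by simp)
  have htranslate : toZModPow n ⁻¹' {a} =
      (fun x => ((b.val : ℤ_[p]) - a.val) + x) ⁻¹' (toZModPow n ⁻¹' {b}) := by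
    ext x
    simp only [mem_preimage, mem_singleton_iff, map_add, map_sub, toZModPow_natCast_val]
    rw [sub_add_comm, add_eq_right, sub_eq_zero]
  rw [htranslate, measure_preimage_add]

theorem measure_preimage_toZModPow_eq_zero_iff {s : Set (ZMod (p ^ n))} :
    μ (toZModPow n ⁻¹' s) = 0 ↔ s = ∅ := by
  refine ⟨fun h => eq_empty_of_forall_notMem fun a ha => ?_, fun h => by simp [h]⟩
  have hle := measure_mono (μ := μ) (preimage_mono (singleton_subset_iff.2 ha) :
    toZModPow n ⁻¹' {a} ⊆ toZModPow n ⁻¹' s)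
  rw [h, measure_preimage_toZModPow_singleton] at hle
  simp at hle

theorem measurePreserving_of_bijective_inducedMap (hf : LipschitzWith 1 f)
    (hF : ∀ n, Bijective (inducedMap f n)) : MeasurePreserving f μ μ := by
  have hmeas := hf.continuous.measurable
  have := Measure.isProbabilityMeasure_map (μ := μ) hmeas.aemeasurable
  refine ⟨hmeas, measure_ext_of_cylinders fun n a => ?_⟩
  obtain ⟨b, rfl⟩ := (hF n).surjective a
  rw [Measure.map_apply hmeas (measurable_toZModPow (measurableSet_singleton _)),
    preimage_preimage_toZModPow hf, measure_preimage_toZModPow_singleton, ← image_singleton,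
    (hF n).injective.preimage_image, measure_preimage_toZModPow_singleton]

theorem ergodic_of_isTransitive_inducedMap (hf : LipschitzWith 1 f)
    (hT : ∀ n, IsTransitive (inducedMap f n)) : Ergodic f μ := by
  have hmp := measurePreserving_of_bijective_inducedMap μ hf fun n => (hT n).bijective
  refine ⟨hmp, ⟨fun s hs hinv => ?_⟩⟩
  have hrestrict : μ.restrict s = μ s • μ := by
    have hmp_s : MeasurePreserving f (μ.restrict s) (μ.restrict s) := by
      simpa only [hinv] using hmp.restrict_preimage hs
    refine measure_ext_of_cylinders fun n a => ?_
    have hconst := (hT n).apply_eq_apply (φ := fun a => μ.restrict s (toZModPow n ⁻¹' {a}))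
      (funext (measure_preimage_toZModPow_inducedMap hf (hT n).bijective.injective hmp_s))
    rw [measure_preimage_toZModPow_singleton_of_forall_eq hconst, Measure.restrict_apply_univ,
      Measure.smul_apply, smul_eq_mul, measure_preimage_toZModPow_singleton, div_eq_mul_inv]
  have hcompl : μ s * μ sᶜ = 0 := by
    simpa [Measure.restrict_apply hs.compl] using (congrArg (· sᶜ) hrestrict).symm
  rw [eventuallyConst_set', ae_eq_empty, ae_eq_univ]
  exact mul_eq_zero.mp hcompl

theorem isTransitive_inducedMap_of_ergodic (hf : LipschitzWith 1 f) (hE : Ergodic f μ) (n : ℕ) :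
    IsTransitive (inducedMap f n) := by
  have hpreimage (s : Set (ZMod (p ^ n))) :
      μ (toZModPow n ⁻¹' (inducedMap f n ⁻¹' s)) = μ (toZModPow n ⁻¹' s) := by
    rw [← preimage_preimage_toZModPow hf,
      hE.measure_preimage (measurable_toZModPow trivial).nullMeasurableSet]
  have hsurj : Surjective (inducedMap f n) := fun a => by
    have hne : inducedMap f n ⁻¹' {a} ≠ ∅ := by
      rw [Ne, ← measure_preimage_toZModPow_eq_zero_iff μ, hpreimage,
        measure_preimage_toZModPow_eq_zero_iff μ]
      exact singleton_ne_empty a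
    exact nonempty_iff_ne_empty.2 hne
  refine isTransitive_of_forall_preimage_eq (Finite.surjective_iff_bijective.mp hsurj)
    fun s hs => ?_
  have hinv : f ⁻¹' (toZModPow n ⁻¹' s) = toZModPow n ⁻¹' s := by
    rw [preimage_preimage_toZModPow hf, hs]
  refine (hE.prob_eq_zero_or_one (measurable_toZModPow trivial) hinv).imp
    (measure_preimage_toZModPow_eq_zero_iff μ).mp fun h => ?_
  rwa [← compl_empty_iff, ← measure_preimage_toZModPow_eq_zero_iff μ, preimage_compl,
    prob_compl_eq_zero_iff (measurable_toZModPow trivial)]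

theorem ergodic_iff_forall_isTransitive_inducedMap (hf : LipschitzWith 1 f) :
    Ergodic f μ ↔ ∀ n, IsTransitive (inducedMap f n) :=
  ⟨isTransitive_inducedMap_of_ergodic μ hf, ergodic_of_isTransitive_inducedMap μ hf⟩

end Measure

section TwoAdic

open Finset

variable {f : ℤ_[2] → ℤ_[2]}

theorem norm_two : ‖(2 : ℤ_[2])‖ = 2⁻¹ := by simpa using norm_p (p := 2)

theorem norm_four : ‖(4 : ℤ_[2])‖ = 4⁻¹ := by
  rw [show (4 : ℤ_[2]) = 2 ^ 2 by norm_num, norm_pow, norm_two]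
  norm_num

theorem two_pow_ne_zero_zmod (n : ℕ) : (2 : ZMod (2 ^ (n + 1))) ^ n ≠ 0 := by
  have h : ((2 ^ n : ℕ) : ZMod (2 ^ (n + 1))) ≠ 0 := by
    rw [Ne, ZMod.natCast_eq_zero_iff, Nat.pow_dvd_pow_iff_le_right one_lt_two]
    omega
  exact_mod_cast h

theorem toZModPow_succ_eq_or_eq_add {x y : ℤ_[2]} (h : toZModPow n x = toZModPow n y) :
    toZModPow (n + 1) x = toZModPow (n + 1) y ∨
      toZModPow (n + 1) x = toZModPow (n + 1) y + 2 ^ n := by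
  set u := toZModPow (n + 1) (x - y) with hu_def
  have hu : ((u.val : ℕ) : ZMod (2 ^ n)) = 0 := by
    rw [← ZMod.cast_eq_val, cast_toZModPow n (n + 1) n.le_succ, map_sub, h, sub_self]
  obtain ⟨c, hc⟩ := (ZMod.natCast_eq_zero_iff _ _).mp hu
  have hc2 : c < 2 := by
    have := ZMod.val_lt u
    rw [hc, pow_succ] at this
    exact Nat.lt_of_mul_lt_mul_left this
  rw [← sub_eq_zero, ← sub_eq_iff_eq_add', ← map_sub, ← hu_def, ← ZMod.natCast_zmod_val u, hc]
  interval_cases c <;> simp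

theorem toZModPow_apply_add_two_pow (hf : LipschitzWith 1 f)
    (hinj : Injective (inducedMap f (n + 1))) (x : ℤ_[2]) :
    toZModPow (n + 1) (f (x + 2 ^ n)) = toZModPow (n + 1) (f x) + 2 ^ n := by
  have hx : toZModPow n (x + 2 ^ n) = toZModPow n x := by
    rw [map_add, map_pow, map_ofNat, add_eq_left]
    exact_mod_cast ZMod.natCast_self (2 ^ n)
  refine (toZModPow_succ_eq_or_eq_add (toZModPow_apply_eq_of_lipschitzWith hf hx)).resolve_left
    fun heq => two_pow_ne_zero_zmod n ?_
  rw [(semiconj_inducedMap hf).eq, (semiconj_inducedMap hf).eq, hinj.eq_iff, map_add, map_pow,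
    map_ofNat, add_eq_left] at heq
  exact heq

theorem toZModPow_apply_sub_eq (hf : LipschitzWith 1 f) (hinj : Injective (inducedMap f (n + 1)))
    {x y : ℤ_[2]} (h : toZModPow n x = toZModPow n y) :
    toZModPow (n + 1) (f x - x) = toZModPow (n + 1) (f y - y) := by
  rw [map_sub, map_sub]
  rcases toZModPow_succ_eq_or_eq_add h with h' | h'
  · rw [toZModPow_apply_eq_of_lipschitzWith hf h', h']
  · have hx : toZModPow (n + 1) x = toZModPow (n + 1) (y + 2 ^ n) := by
      rw [h', map_add, map_pow, map_ofNat]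
    rw [toZModPow_apply_eq_of_lipschitzWith hf hx, toZModPow_apply_add_two_pow hf hinj, h']
    ring

theorem toZModPow_iterate_two_pow_eq_sum (hf : LipschitzWith 1 f)
    (hT : IsTransitive (inducedMap f n)) (hinj : Injective (inducedMap f (n + 1))) :
    toZModPow (n + 1) (f^[2 ^ n] 0) =
      ∑ l ∈ range (2 ^ n), toZModPow (n + 1) (f l - (l : ℤ_[2])) := by
  set φ : ZMod (2 ^ n) → ZMod (2 ^ (n + 1)) := fun a => toZModPow (n + 1) (f a.val - a.val)
  have hstep (j : ℕ) :
      toZModPow (n + 1) (f (f^[j] 0) - f^[j] 0) = φ ((inducedMap f n)^[j] 0) := by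
    refine toZModPow_apply_sub_eq hf hinj ?_
    rw [toZModPow_natCast_val, toZModPow_iterate hf, map_zero]
  calc toZModPow (n + 1) (f^[2 ^ n] 0)
      = ∑ j ∈ range (2 ^ n), toZModPow (n + 1) (f (f^[j] 0) - f^[j] 0) := by
        rw [← map_sum]
        simp only [← iterate_succ_apply' f]
        rw [sum_range_sub (fun j => f^[j] 0), iterate_zero_apply, sub_zero]
    _ = ∑ j ∈ range (Fintype.card (ZMod (2 ^ n))), φ ((inducedMap f n)^[j] 0) := by
        rw [ZMod.card]
        exact sum_congr rfl fun j _ => hstep j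
    _ = ∑ a, φ a := hT.sum_range_card_iterate φ 0
    _ = ∑ l ∈ range (2 ^ n), toZModPow (n + 1) (f l - (l : ℤ_[2])) :=
        sum_nbij' ZMod.val Nat.cast (fun a _ => mem_range.2 (ZMod.val_lt a))
          (fun _ _ => mem_univ _) (fun a _ => ZMod.natCast_zmod_val a)
          (fun l hl => ZMod.val_cast_of_lt (mem_range.1 hl)) fun _ _ => rfl

theorem isTransitive_inducedMap_succ_iff (hf : LipschitzWith 1 f)
    (hT : IsTransitive (inducedMap f n)) (hinj : Injective (inducedMap f (n + 1))) :
    IsTransitive (inducedMap f (n + 1)) ↔ (inducedMap f (n + 1))^[2 ^ n] 0 ≠ 0 := by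
  set F := inducedMap f (n + 1)
  have hshift (a : ZMod (2 ^ (n + 1))) : F^[2 ^ n] a = a ∨ F^[2 ^ n] a = a + 2 ^ n := by
    have hid := hT.iterate_card (toZModPow n a.val)
    rw [ZMod.card, ← toZModPow_iterate hf] at hid
    simpa only [toZModPow_iterate hf, toZModPow_natCast_val] using
      toZModPow_succ_eq_or_eq_add hid
  have hcard : Fintype.card (ZMod (2 ^ (n + 1))) = 2 ^ (n + 1) := ZMod.card _
  constructor
  · intro hT' h0
    have := (show IsPeriodicPt F (2 ^ n) 0 from h0).minimalPeriod_le (by positivity)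
    rw [hT'.minimalPeriod_eq_card, hcard, pow_succ] at this
    nlinarith [Nat.two_pow_pos n]
  · intro hne
    have hc : F^[2 ^ n] 0 = 2 ^ n := by simpa [hne] using hshift 0
    have hper : IsPeriodicPt F (2 ^ (n + 1)) 0 := by
      -- `F^[2 ^ n]` cannot fix `F^[2 ^ n] 0`, or by injectivity it would fix `0`.
      have h2 : F^[2 ^ n] (F^[2 ^ n] 0) = F^[2 ^ n] 0 + 2 ^ n :=
        (hshift _).resolve_left fun h => hne (hinj.iterate _ h)
      rw [IsPeriodicPt, IsFixedPt, congrArg (F^[·] 0) (pow_succ 2 n), mul_two, iterate_add_apply,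
        h2, hc, ← two_mul, ← pow_succ']
      exact_mod_cast ZMod.natCast_self (2 ^ (n + 1))
    obtain ⟨m, hm, hmeq⟩ := (Nat.dvd_prime_pow Nat.prime_two).1 hper.minimalPeriod_dvd
    have hmn : ¬m ≤ n := fun hmn =>
      hne (isPeriodicPt_iff_minimalPeriod_dvd.2 (hmeq ▸ pow_dvd_pow 2 hmn))
    refine isTransitive_of_minimalPeriod_eq_card (x := 0) ?_
    rw [hmeq, hcard, show m = n + 1 by omega]

section AddFourMul

variable {t w : ℤ_[2] → ℤ_[2]}

theorem norm_sum_range_two_pow_le (hw : LipschitzWith 1 w) (m : ℕ) :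
    ‖∑ l ∈ range (2 ^ m), w l‖ ≤ 2 * 2 ^ (-(m : ℤ)) := by
  induction m with
  | zero => simpa using (norm_le_one _).trans one_le_two
  | succ m ih =>
    have hsplit : ∑ l ∈ range (2 ^ (m + 1)), w l =
        2 * ∑ l ∈ range (2 ^ m), w l + ∑ l ∈ range (2 ^ m), (w ↑(2 ^ m + l) - w l) := by
      rw [pow_succ, mul_two, sum_range_add, sum_sub_distrib]
      ring
    have hbound : (2 : ℝ) * 2 ^ (-((m + 1 : ℕ) : ℤ)) = 2 ^ (-(m : ℤ)) := by
      rw [Nat.cast_succ, neg_add, zpow_add₀ two_ne_zero, zpow_neg_one]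
      ring
    rw [hsplit, hbound]
    refine (IsUltrametricDist.norm_add_le_max _ _).trans (max_le ?_ ?_)
    · rw [norm_mul, norm_two]
      linarith
    · refine IsUltrametricDist.norm_sum_le_of_forall_le_of_nonneg (by positivity) fun l _ => ?_
      refine (hw.norm_sub_le _ _).trans ?_
      simp [norm_two]

theorem toZModPow_four_mul_sum_range_eq_zero (hw : LipschitzWith 1 w) (n : ℕ) :
    toZModPow (n + 1) (4 * ∑ l ∈ range (2 ^ n), w l) = 0 := by
  rw [toZModPow_eq_zero_iff_norm_le, norm_mul, norm_four]
  calc (4 : ℝ)⁻¹ * ‖∑ l ∈ range (2 ^ n), w l‖ ≤ 4⁻¹ * (2 * 2 ^ (-(n : ℤ))) :=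
        mul_le_mul_of_nonneg_left (norm_sum_range_two_pow_le hw n) (by norm_num)
    _ = (2 : ℕ) ^ (-((n + 1 : ℕ) : ℤ)) := by
        push_cast
        rw [neg_add, zpow_add₀ two_ne_zero, zpow_neg_one]
        ring

theorem norm_four_mul_sub_le (hw : LipschitzWith 1 w) (x y : ℤ_[2]) :
    ‖4 * w x - 4 * w y‖ ≤ 4⁻¹ * ‖x - y‖ := by
  rw [← mul_sub, norm_mul, norm_four]
  exact mul_le_mul_of_nonneg_left (by simpa using hw.norm_sub_le x y) (by norm_num)

theorem lipschitzWith_add_four_mul (ht : LipschitzWith 1 t) (hw : LipschitzWith 1 w) :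
    LipschitzWith 1 (fun x => t x + 4 * w x) :=
  ht.add_of_isUltrametricDist <| lipschitzWith_iff_norm_sub_le.2 fun x y =>
    (norm_four_mul_sub_le hw x y).trans <| by
      rw [NNReal.coe_one, one_mul]
      linarith [norm_nonneg (x - y)]

theorem isometry_add_four_mul (ht : Isometry t) (hw : LipschitzWith 1 w) :
    Isometry (fun x => t x + 4 * w x) :=
  ht.add_of_norm_sub_lt fun x y hxy => (norm_four_mul_sub_le hw x y).trans_lt
    (by linarith [norm_pos_iff.2 (sub_ne_zero.2 hxy)])

theorem isTransitive_inducedMap_add_four_mul (ht : LipschitzWith 1 t) (hw : LipschitzWith 1 w)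
    (hT : ∀ n, IsTransitive (inducedMap t n)) (n : ℕ) :
    IsTransitive (inducedMap (fun x => t x + 4 * w x) n) := by
  set g := fun x => t x + 4 * w x
  have hg : LipschitzWith 1 g := lipschitzWith_add_four_mul ht hw
  have hinj (n : ℕ) : Injective (inducedMap g n) := injective_inducedMap_of_isometry <|
    isometry_add_four_mul (isometry_of_forall_injective_inducedMap ht fun n =>
      (hT n).bijective.injective) hw
  induction n with
  | zero =>
    have : Subsingleton (ZMod (2 ^ 0)) := inferInstanceAs (Subsingleton (ZMod 1))
    exact fun _ _ => ⟨0, Subsingleton.elim _ _⟩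
  | succ n ih =>
    have horbit : (inducedMap g (n + 1))^[2 ^ n] 0 = (inducedMap t (n + 1))^[2 ^ n] 0 := by
      rw [← map_zero (toZModPow (n + 1)), ← toZModPow_iterate hg, ← toZModPow_iterate ht,
        toZModPow_iterate_two_pow_eq_sum hg ih (hinj _),
        toZModPow_iterate_two_pow_eq_sum ht (hT n) (hT _).bijective.injective, ← map_sum,
        ← map_sum]
      have hsum : ∑ l ∈ range (2 ^ n), (g l - (l : ℤ_[2])) =
          ∑ l ∈ range (2 ^ n), (t l - (l : ℤ_[2])) + 4 * ∑ l ∈ range (2 ^ n), w l := by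
        rw [mul_sum, ← sum_add_distrib]
        exact sum_congr rfl fun l _ => by ring
      rw [hsum, map_add, toZModPow_four_mul_sum_range_eq_zero hw, add_zero]
    rw [isTransitive_inducedMap_succ_iff hg ih (hinj _), horbit,
      ← isTransitive_inducedMap_succ_iff ht (hT n) (hT _).bijective.injective]
    exact hT _

end AddFourMul

end TwoAdic

end PadicInt

open PadicInt

theorem ergodic_add_four_mul_iff
    (μ : Measure ℤ_[2]) (hμ : μ.IsAddHaarMeasure) (hμ1 : IsProbabilityMeasure μ)
    (t w : ℤ_[2] → ℤ_[2])
    (ht : ∀ x y : ℤ_[2], ‖t x - t y‖ ≤ ‖x - y‖)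
    (hw : ∀ x y : ℤ_[2], ‖w x - w y‖ ≤ ‖x - y‖) :
    Ergodic (fun x => t x + 4 * w x) μ ↔ Ergodic t μ := by
  have hlip {f : ℤ_[2] → ℤ_[2]} (hf : ∀ x y, ‖f x - f y‖ ≤ ‖x - y‖) : LipschitzWith 1 f :=
    lipschitzWith_iff_norm_sub_le.2 (by simpa using hf)
  have hg := lipschitzWith_add_four_mul (hlip ht) (hlip hw)
  rw [ergodic_iff_forall_isTransitive_inducedMap μ hg,
    ergodic_iff_forall_isTransitive_inducedMap μ (hlip ht)]
  refine ⟨fun hT => ?_, isTransitive_inducedMap_add_four_mul (hlip ht) (hlip hw)⟩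
  simpa using isTransitive_inducedMap_add_four_mul hg (hlip hw).neg hT
end
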